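/- Let A be a finite set and let H ⊆ A × A be the edge set of a directed graph on A. Let B be the set of bridge edges of H, and for every strongly connected component S of H choose a maximal child C_S of the edge set H ∩ (S × S). Then the edge set B ∪ ⋃_S C_S (the union taken over all strongly connected components S of H) is a maximal child of H. -/

import Mathlib

/-- The edge relation of an edge set `E ⊆ A × A`. -/
def EdgeRel {A : Type*} (E : Set (A × A)) : A → A → Prop := fun u v => (u, v) ∈ E

/-- An edge set is acyclic if no vertex has a path of length ≥ 1 back to itself. -/
def AcyclicEdges {A : Type*} (E : Set (A × A)) : Prop :=
  ∀ a : A, ¬ Relation.TransGen (EdgeRel E) a a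

/-- Two vertices are strongly connected in `E` if they are equal or there are paths
of length ≥ 1 both ways. -/
def StronglyConn {A : Type*} (E : Set (A × A)) (u v : A) : Prop :=
  u = v ∨ (Relation.TransGen (EdgeRel E) u v ∧ Relation.TransGen (EdgeRel E) v u)

/-- `S` is a strongly connected component of `E`: an equivalence class of the
strongly-connected relation. -/
def IsSCC {A : Type*} (E : Set (A × A)) (S : Set A) : Prop :=
  ∃ a : A, S = {b : A | StronglyConn E a b}

/-- The bridge edges of `E`: edges whose endpoints are not strongly connected in `E`. -/
def BridgeEdges {A : Type*} (E : Set (A × A)) : Set (A × A) :=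
  {e | e ∈ E ∧ ¬ StronglyConn E e.1 e.2}

/-- `C` is a maximal child of the directed graph with edge set `H`. -/
def MaximalChild {A : Type*} (H C : Set (A × A)) : Prop :=
  C ⊆ H ∧ AcyclicEdges C ∧ ∀ e ∈ H \ C, ¬ AcyclicEdges (C ∪ {e})

/-!
Write `D` for the union of the bridges and the children `C_S`; it lies in `H`. Every vertex
on a cycle of `D` is strongly connected in `H` to the cycle's base point, so the cycle uses
no bridge and stays inside one component `S`; each of its edges then belongs to `C_S`,
contradicting the acyclicity of `C_S`. Conversely, an edge of `H` outside `D` is not a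
bridge, so it lies in `(H ∩ S × S) \ C_S` for the component `S` of its tail, and it closes
a cycle already with `C_S ⊆ D`.
-/

open Relation

theorem Relation.TransGen.restrict_between {α : Type*} {r : α → α → Prop} {a b : α}
    (h : TransGen r a b) :
    TransGen (fun u v => r u v ∧ ReflTransGen r a u ∧ ReflTransGen r v b) a b := by
  induction h with
  | single hab => exact .single ⟨hab, .refl, .refl⟩
  | tail hac hcb ih =>
    exact .tail (TransGen.mono (fun _ _ ⟨huv, hau, hvc⟩ => ⟨huv, hau, hvc.tail hcb⟩) _ _ ih)
      ⟨hcb, hac.to_reflTransGen, .refl⟩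

section EdgeSets

variable {A : Type*} {E F : Set (A × A)} {u v w : A}

theorem transGen_edgeRel_mono (hEF : E ⊆ F) (h : TransGen (EdgeRel E) u v) :
    TransGen (EdgeRel F) u v :=
  TransGen.mono (fun _ _ hab => hEF hab) _ _ h

theorem AcyclicEdges.mono (hEF : E ⊆ F) (hF : AcyclicEdges F) : AcyclicEdges E :=
  fun a h => hF a (transGen_edgeRel_mono hEF h)

theorem StronglyConn.refl (E : Set (A × A)) (u : A) : StronglyConn E u u :=
  .inl rfl

theorem StronglyConn.symm : StronglyConn E u v → StronglyConn E v u
  | .inl h => .inl h.symm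
  | .inr ⟨huv, hvu⟩ => .inr ⟨hvu, huv⟩

theorem StronglyConn.trans (huv : StronglyConn E u v) (hvw : StronglyConn E v w) :
    StronglyConn E u w := by
  rcases huv with rfl | ⟨huv, hvu⟩
  · exact hvw
  rcases hvw with rfl | ⟨hvw, hwv⟩
  · exact .inr ⟨huv, hvu⟩
  · exact .inr ⟨huv.trans hvw, hwv.trans hvu⟩

theorem StronglyConn.mono (hEF : E ⊆ F) : StronglyConn E u v → StronglyConn F u v
  | .inl h => .inl h
  | .inr ⟨huv, hvu⟩ => .inr ⟨transGen_edgeRel_mono hEF huv, transGen_edgeRel_mono hEF hvu⟩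

theorem stronglyConn_of_reflTransGen (huv : ReflTransGen (EdgeRel E) u v)
    (hvu : ReflTransGen (EdgeRel E) v u) : StronglyConn E u v := by
  rcases reflTransGen_iff_eq_or_transGen.mp huv with rfl | huv
  · exact .refl E _
  rcases reflTransGen_iff_eq_or_transGen.mp hvu with rfl | hvu
  · exact .refl E _
  exact .inr ⟨huv, hvu⟩

theorem IsSCC.eq_of_mem {S : Set A} (hS : IsSCC E S) (hu : u ∈ S) :
    S = {b | StronglyConn E u b} := by
  obtain ⟨s, rfl⟩ := hS
  ext b
  exact ⟨fun hb => (StronglyConn.symm hu).trans hb, fun hb => StronglyConn.trans hu hb⟩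

end EdgeSets

section SCCChildren

variable {A : Type*} {H : Set (A × A)} {Cc : Set A → Set (A × A)}

theorem bridgeEdges_union_subset (hsub : ∀ S, IsSCC H S → Cc S ⊆ H ∩ S ×ˢ S) :
    BridgeEdges H ∪ ⋃ S ∈ {S | IsSCC H S}, Cc S ⊆ H :=
  Set.union_subset (fun _ he => he.1)
    (Set.iUnion₂_subset fun S hS => (hsub S hS).trans Set.inter_subset_left)

theorem mem_sccChild_of_stronglyConn (hsub : ∀ S, IsSCC H S → Cc S ⊆ H ∩ S ×ˢ S) {u v : A}
    (he : (u, v) ∈ BridgeEdges H ∪ ⋃ S ∈ {S | IsSCC H S}, Cc S)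
    (huv : StronglyConn H u v) : (u, v) ∈ Cc {b | StronglyConn H u b} := by
  rcases he with hbridge | he
  · exact absurd huv hbridge.2
  obtain ⟨S, hS, heS⟩ := Set.mem_iUnion₂.mp he
  rwa [← IsSCC.eq_of_mem hS (hsub S hS heS).2.1]

theorem acyclicEdges_bridgeEdges_union (hsub : ∀ S, IsSCC H S → Cc S ⊆ H ∩ S ×ˢ S)
    (hacyc : ∀ S, IsSCC H S → AcyclicEdges (Cc S)) :
    AcyclicEdges (BridgeEdges H ∪ ⋃ S ∈ {S | IsSCC H S}, Cc S) := by
  intro a hcycle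
  have hDH := bridgeEdges_union_subset hsub
  refine hacyc _ ⟨a, rfl⟩ a (TransGen.mono (fun u v ⟨huv, hau, hva⟩ => ?_) _ _
    hcycle.restrict_between)
  have hau' : StronglyConn H a u := (stronglyConn_of_reflTransGen hau (hva.head huv)).mono hDH
  have hav' : StronglyConn H a v := (stronglyConn_of_reflTransGen (hau.tail huv) hva).mono hDH
  have hmem := mem_sccChild_of_stronglyConn hsub huv (hau'.symm.trans hav')
  rwa [← IsSCC.eq_of_mem ⟨a, rfl⟩ hau'] at hmem

theorem not_acyclicEdges_bridgeEdges_union_insert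
    (hmax : ∀ S, IsSCC H S → ∀ e ∈ (H ∩ S ×ˢ S) \ Cc S, ¬ AcyclicEdges (Cc S ∪ {e})) :
    ∀ e ∈ H \ (BridgeEdges H ∪ ⋃ S ∈ {S | IsSCC H S}, Cc S),
      ¬ AcyclicEdges ((BridgeEdges H ∪ ⋃ S ∈ {S | IsSCC H S}, Cc S) ∪ {e}) := by
  rintro ⟨u, v⟩ ⟨heH, heD⟩ hacyc
  have huv : StronglyConn H u v := by_contra fun h => heD (.inl ⟨heH, h⟩)
  have hS : IsSCC H {b | StronglyConn H u b} := ⟨u, rfl⟩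
  refine hmax _ hS (u, v) ⟨⟨heH, .refl H u, huv⟩, fun he => heD (.inr (Set.mem_biUnion hS he))⟩
    (hacyc.mono (Set.union_subset_union_left _ fun e he => .inr (Set.mem_biUnion hS he)))

end SCCChildren

theorem bridges_union_sccMaxChildren_isMaximalChild_general {A : Type*}
    (H : Set (A × A)) (Cc : Set A → Set (A × A))
    (hCc : ∀ S : Set A, IsSCC H S → MaximalChild (H ∩ S ×ˢ S) (Cc S)) :
    MaximalChild H (BridgeEdges H ∪ ⋃ S ∈ {S : Set A | IsSCC H S}, Cc S) :=
  ⟨bridgeEdges_union_subset fun S hS => (hCc S hS).1,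
    acyclicEdges_bridgeEdges_union (fun S hS => (hCc S hS).1) fun S hS => (hCc S hS).2.1,
    not_acyclicEdges_bridgeEdges_union_insert fun S hS => (hCc S hS).2.2⟩

theorem bridges_union_sccMaxChildren_isMaximalChild {A : Type*} [Fintype A]
    (H : Set (A × A)) (Cc : Set A → Set (A × A))
    (hCc : ∀ S : Set A, IsSCC H S → MaximalChild (H ∩ S ×ˢ S) (Cc S)) :
    MaximalChild H (BridgeEdges H ∪ ⋃ S ∈ {S : Set A | IsSCC H S}, Cc S) :=
  bridges_union_sccMaxChildren_isMaximalChild_general H Cc hCc
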